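/- Let n and ℓ be positive integers and A, B ∈ ℂ^{n×ℓ}. Then d_{U(n)}(A,B)² = ‖A‖² + ‖B‖² − 2‖AB*‖_★. Moreover, there exists a unitary matrix W ∈ U(n) such that WAB* is positive semidefinite Hermitian, and for any such W one has d_{U(n)}(A,B) = ‖WA − B‖. -/

import Mathlib

open Matrix
open scoped ComplexOrder

/-- Frobenius norm of a real matrix: `‖A‖ = √(trace (A Aᵀ))`. -/
noncomputable def frobR {n l : ℕ} (A : Matrix (Fin n) (Fin l) ℝ) : ℝ :=
  Real.sqrt (Matrix.trace (A * Aᵀ))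

/-- Frobenius norm of a complex matrix: `‖A‖ = √(trace (A Aᴴ))`. -/
noncomputable def frobC {n l : ℕ} (A : Matrix (Fin n) (Fin l) ℂ) : ℝ :=
  Real.sqrt (Matrix.trace (A * Aᴴ)).re

open Classical in
/-- The unique positive semidefinite square root of a positive semidefinite real
symmetric matrix (junk value `0` if `M` is not positive semidefinite). -/
noncomputable def matSqrtR {k : ℕ} (M : Matrix (Fin k) (Fin k) ℝ) : Matrix (Fin k) (Fin k) ℝ :=
  if h : M.PosSemidef then h.1.eigenvectorUnitary.1 *
    diagonal (((↑) : ℝ → _) ∘ Real.sqrt ∘ h.1.eigenvalues) *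
    (star h.1.eigenvectorUnitary : Matrix (Fin k) (Fin k) _) else 0

open Classical in
/-- The unique positive semidefinite square root of a positive semidefinite hermitian
matrix (junk value `0` if `M` is not positive semidefinite). -/
noncomputable def matSqrtC {k : ℕ} (M : Matrix (Fin k) (Fin k) ℂ) : Matrix (Fin k) (Fin k) ℂ :=
  if h : M.PosSemidef then h.1.eigenvectorUnitary.1 *
    diagonal (((↑) : ℝ → _) ∘ Real.sqrt ∘ h.1.eigenvalues) *
    (star h.1.eigenvectorUnitary : Matrix (Fin k) (Fin k) _) else 0

/-- Orbit distance for the orthogonal group `O(n)` acting by left multiplication. -/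
noncomputable def dO {n l : ℕ} (A B : Matrix (Fin n) (Fin l) ℝ) : ℝ :=
  sInf {x | ∃ W ∈ Matrix.orthogonalGroup (Fin n) ℝ, x = frobR (W * A - B)}

/-- Orbit distance for the unitary group `U(n)` acting by left multiplication. -/
noncomputable def dU {n l : ℕ} (A B : Matrix (Fin n) (Fin l) ℂ) : ℝ :=
  sInf {x | ∃ W ∈ Matrix.unitaryGroup (Fin n) ℂ, x = frobC (W * A - B)}

/-- `q𝟙ᵀ` : the `n × l` matrix each of whose columns equals `q` (real case). -/
def colMatR {n l : ℕ} (q : Fin n → ℝ) : Matrix (Fin n) (Fin l) ℝ :=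
  Matrix.of fun i _ => q i

/-- `q𝟙ᵀ` : the `n × l` matrix each of whose columns equals `q` (complex case). -/
def colMatC {n l : ℕ} (q : Fin n → ℂ) : Matrix (Fin n) (Fin l) ℂ :=
  Matrix.of fun i _ => q i

/-- Orbit distance for the euclidean group `E(n) = O(n) ⋉ ℝⁿ` acting columnwise. -/
noncomputable def dE {n l : ℕ} (A B : Matrix (Fin n) (Fin l) ℝ) : ℝ :=
  sInf {x | ∃ P ∈ Matrix.orthogonalGroup (Fin n) ℝ, ∃ q : Fin n → ℝ,
    x = frobR (P * A + colMatR q - B)}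

/-- Orbit distance for the complex euclidean group `F(n) = U(n) ⋉ ℂⁿ` acting columnwise. -/
noncomputable def dF {n l : ℕ} (A B : Matrix (Fin n) (Fin l) ℂ) : ℝ :=
  sInf {x | ∃ P ∈ Matrix.unitaryGroup (Fin n) ℂ, ∃ q : Fin n → ℂ,
    x = frobC (P * A + colMatC q - B)}

/-- Column-centering `π` : subtract from each column the average of all columns (real case). -/
noncomputable def centerR {n l : ℕ} (A : Matrix (Fin n) (Fin l) ℝ) : Matrix (Fin n) (Fin l) ℝ :=
  Matrix.of fun i j => A i j - (∑ k, A i k) / (l : ℝ)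

/-- Column-centering `π_ℂ` : subtract from each column the average of all columns (complex case). -/
noncomputable def centerC {n l : ℕ} (A : Matrix (Fin n) (Fin l) ℂ) : Matrix (Fin n) (Fin l) ℂ :=
  Matrix.of fun i j => A i j - (∑ k, A i k) / (l : ℂ)

/-- Nuclear norm `‖M‖_★ = trace √(M M*)`, the sum of the singular values of `M`. -/
noncomputable def nucNorm {k : ℕ} (M : Matrix (Fin k) (Fin k) ℂ) : ℝ :=
  (Matrix.trace (matSqrtC (M * Mᴴ))).re

/-!
Expanding the square, `‖WA - B‖² = ‖A‖² + ‖B‖² - 2 Re tr (W M)` with `M = AB*`, so the distance is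
attained where `Re tr (W M)` is largest. Since `P = √(M*M)` has the same Gram matrix as `M`, the map
`Mx ↦ Px` is a well defined isometry of `range M`, and extending it to a unitary `W₀` gives the polar
decomposition `W₀ M = P ≥ 0`. For any unitary `W`, `Re tr (W M) = Re tr (W W₀* P) ≤ tr P`, as one sees
by diagonalising `P` and using that the entries of a unitary matrix have modulus at most one.
Finally `√(MM*) = W₀* P W₀`, so `tr P = ‖M‖_★`.
-/

lemma LinearMap.exists_linearIsometry_comp_eq_of_norm_eq {𝕜 V W : Type*} [RCLike 𝕜]
    [NormedAddCommGroup V] [InnerProductSpace 𝕜 V] [FiniteDimensional 𝕜 V] [AddCommGroup W]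
    [Module 𝕜 W] {f g : W →ₗ[𝕜] V} (h : ∀ x, ‖g x‖ = ‖f x‖) :
    ∃ U : V →ₗᵢ[𝕜] V, ∀ x, U (f x) = g x := by
  have hker : ker f ≤ ker g := fun x hx => by
    rw [mem_ker, ← norm_eq_zero, h, norm_eq_zero, ← mem_ker]
    exact hx
  let L : range f →ₗ[𝕜] V := (ker f).liftQ g hker ∘ₗ f.quotKerEquivRange.symm.toLinearMap
  have hL : ∀ x, L ⟨f x, mem_range_self f x⟩ = g x := fun x => by
    simp [L]
  have hLnorm : ∀ y, ‖L y‖ = ‖y‖ := by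
    rintro ⟨_, x, rfl⟩
    rw [hL, h]
    rfl
  let L' : range f →ₗᵢ[𝕜] V := ⟨L, hLnorm⟩
  exact ⟨L'.extend, fun x => (L'.extend_apply ⟨f x, mem_range_self f x⟩).trans (hL x)⟩

namespace Matrix

section Unitary

variable {𝕜 n : Type*} [RCLike 𝕜] [Fintype n] [DecidableEq n]

lemma norm_toEuclideanCLM_eq_of_conjTranspose_mul_self_eq {M P : Matrix n n 𝕜}
    (h : Pᴴ * P = Mᴴ * M) (x : EuclideanSpace 𝕜 n) :
    ‖toEuclideanCLM (𝕜 := 𝕜) P x‖ = ‖toEuclideanCLM (𝕜 := 𝕜) M x‖ := by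
  have key : ∀ X : Matrix n n 𝕜, ‖toEuclideanCLM (𝕜 := 𝕜) X x‖ ^ 2 =
      RCLike.re (inner 𝕜 x (toEuclideanCLM (𝕜 := 𝕜) (Xᴴ * X) x)) := by
    intro X
    rw [← star_eq_conjTranspose, map_mul, map_star, mul_apply_eq_comp,
      ContinuousLinearMap.star_eq_adjoint, ContinuousLinearMap.adjoint_inner_right,
      inner_self_eq_norm_sq]
  rw [← sq_eq_sq₀ (norm_nonneg _) (norm_nonneg _), key, key, h]

lemma mem_unitaryGroup_of_norm_toEuclideanCLM {W : Matrix n n 𝕜}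
    (hW : ∀ x, ‖toEuclideanCLM (𝕜 := 𝕜) W x‖ = ‖x‖) : W ∈ unitaryGroup n 𝕜 := by
  rw [mem_unitaryGroup_iff']
  apply EmbeddingLike.injective (toEuclideanCLM (n := n) (𝕜 := 𝕜))
  rw [map_mul, map_star, map_one, ContinuousLinearMap.star_eq_adjoint]
  exact (ContinuousLinearMap.norm_map_iff_adjoint_comp_self _).mp hW

lemma exists_unitary_mul_eq_of_conjTranspose_mul_self_eq {M P : Matrix n n 𝕜}
    (h : Pᴴ * P = Mᴴ * M) : ∃ W ∈ unitaryGroup n 𝕜, W * M = P := by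
  obtain ⟨U, hU⟩ := LinearMap.exists_linearIsometry_comp_eq_of_norm_eq
    (f := (toEuclideanCLM (n := n) (𝕜 := 𝕜) M).toLinearMap)
    (g := (toEuclideanCLM (n := n) (𝕜 := 𝕜) P).toLinearMap)
    (norm_toEuclideanCLM_eq_of_conjTranspose_mul_self_eq h)
  refine ⟨(toEuclideanCLM (n := n) (𝕜 := 𝕜)).symm U.toContinuousLinearMap,
    mem_unitaryGroup_of_norm_toEuclideanCLM fun x => by simp, ?_⟩
  apply EmbeddingLike.injective (toEuclideanCLM (n := n) (𝕜 := 𝕜))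
  ext1 x
  rw [map_mul, mul_apply_eq_comp, StarAlgEquiv.apply_symm_apply]
  exact hU x

open scoped MatrixOrder in
lemma exists_unitary_mul_posSemidef (M : Matrix n n 𝕜) :
    ∃ W ∈ unitaryGroup n 𝕜, (W * M).PosSemidef := by
  set P := CFC.sqrt (Mᴴ * M)
  have hP : Pᴴ * P = Mᴴ * M := by
    rw [(CFC.sqrt_nonneg _).posSemidef.1.eq,
      CFC.sqrt_mul_sqrt_self _ (posSemidef_conjTranspose_mul_self M).nonneg]
  obtain ⟨W, hW, hWM⟩ := exists_unitary_mul_eq_of_conjTranspose_mul_self_eq hP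
  exact ⟨W, hW, hWM ▸ (CFC.sqrt_nonneg _).posSemidef⟩

end Unitary

variable {m n : Type*} [Fintype m] [Fintype n] [DecidableEq n]

lemma re_trace_unitary_mul_le {Q P : Matrix n n ℂ} (hQ : Q ∈ unitaryGroup n ℂ)
    (hP : P.PosSemidef) : (Q * P).trace.re ≤ P.trace.re := by
  set U : Matrix n n ℂ := hP.1.eigenvectorUnitary.1
  set d := hP.1.eigenvalues
  have hV : star U * Q * U ∈ unitaryGroup n ℂ :=
    mul_mem (mul_mem (Unitary.star_mem hP.1.eigenvectorUnitary.2) hQ) hP.1.eigenvectorUnitary.2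
  have hspec : P = U * diagonal (RCLike.ofReal ∘ d) * star U := by
    conv_lhs => rw [hP.1.spectral_theorem, Unitary.conjStarAlgAut_apply]
  have htrace : P.trace.re = ∑ i, d i := by simp [hP.1.trace_eq_sum_eigenvalues, d]
  have hd : ∀ i, 0 ≤ d i := hP.eigenvalues_nonneg
  clear_value U d
  rw [htrace, hspec, ← mul_assoc, ← mul_assoc, trace_mul_comm, ← mul_assoc, ← mul_assoc]
  simp only [trace, diag, mul_diagonal, Function.comp_apply, Complex.re_sum]
  refine Finset.sum_le_sum fun i _ => ?_
  rw [RCLike.ofReal_eq_complex_ofReal, Complex.re_mul_ofReal]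
  exact mul_le_of_le_one_left (hd i)
    ((Complex.re_le_norm _).trans (entry_norm_bound_of_unitary hV i i))

lemma re_trace_mul_le_of_unitary_mul_posSemidef {M W W₀ : Matrix n n ℂ}
    (hW : W ∈ unitaryGroup n ℂ) (hW₀ : W₀ ∈ unitaryGroup n ℂ) (hP : (W₀ * M).PosSemidef) :
    (W * M).trace.re ≤ (W₀ * M).trace.re := by
  have hM : W * M = W * star W₀ * (W₀ * M) := by
    rw [mul_assoc W, ← mul_assoc (star W₀), Unitary.star_mul_self_of_mem hW₀, one_mul]
  rw [hM]
  exact re_trace_unitary_mul_le (mul_mem hW (Unitary.star_mem hW₀)) hP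

lemma re_trace_unitary_mul_sub_mul_conjTranspose {W : Matrix n n ℂ} (hW : W ∈ unitaryGroup n ℂ)
    (A B : Matrix n m ℂ) :
    ((W * A - B) * (W * A - B)ᴴ).trace.re =
      (A * Aᴴ).trace.re + (B * Bᴴ).trace.re - 2 * (W * (A * Bᴴ)).trace.re := by
  have hAA : (W * A * (W * A)ᴴ).trace = (A * Aᴴ).trace := by
    rw [conjTranspose_mul, Matrix.mul_assoc, trace_mul_comm W]
    simp only [Matrix.mul_assoc]
    rw [← star_eq_conjTranspose, Unitary.star_mul_self_of_mem hW, Matrix.mul_one]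
  have hBA : (B * (W * A)ᴴ).trace = star (W * (A * Bᴴ)).trace := by
    rw [← trace_conjTranspose, conjTranspose_mul, conjTranspose_mul, conjTranspose_mul,
      conjTranspose_conjTranspose, Matrix.mul_assoc]
  rw [conjTranspose_sub, Matrix.sub_mul, Matrix.mul_sub, Matrix.mul_sub, trace_sub, trace_sub,
    trace_sub, hAA, hBA, Matrix.mul_assoc W A]
  simp only [Complex.sub_re, Complex.star_def, Complex.conj_re]
  ring

end Matrix

open scoped MatrixOrder in
lemma matSqrtC_eq_cfcSqrt {k : ℕ} {M : Matrix (Fin k) (Fin k) ℂ} (hM : M.PosSemidef) :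
    matSqrtC M = CFC.sqrt M := by
  rw [matSqrtC, dif_pos hM, CFC.sqrt_eq_cfc, cfc_nnreal_eq_real _ M, hM.1.cfc_eq]
  simp only [IsHermitian.cfc, Unitary.conjStarAlgAut_apply]
  congr
  funext x
  by_cases hx : 0 ≤ x
  · rw [Real.coe_sqrt, Real.coe_toNNReal _ hx]
  · rw [Real.sqrt_eq_zero_of_nonpos (le_of_not_ge hx), Real.toNNReal_of_nonpos (le_of_not_ge hx)]
    simp

open scoped MatrixOrder in
lemma nucNorm_eq_re_trace_unitary_mul {k : ℕ} {M W : Matrix (Fin k) (Fin k) ℂ}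
    (hW : W ∈ unitaryGroup (Fin k) ℂ) (hP : (W * M).PosSemidef) :
    nucNorm M = (W * M).trace.re := by
  have hM : M = star W * (W * M) := by
    rw [← mul_assoc, Unitary.star_mul_self_of_mem hW, one_mul]
  have hsqrt : CFC.sqrt (M * Mᴴ) = star W * (W * M) * W := by
    refine CFC.sqrt_unique ?_ (hP.conjTranspose_mul_mul_same W).nonneg
    conv_rhs => rw [hM, conjTranspose_mul, hP.1.eq, star_eq_conjTranspose,
      conjTranspose_conjTranspose]
    simp only [← mul_assoc]
    rw [mul_assoc _ W (star W), Unitary.mul_star_self_of_mem hW, mul_one, star_eq_conjTranspose]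
  rw [nucNorm, matSqrtC_eq_cfcSqrt (posSemidef_self_mul_conjTranspose M), hsqrt, trace_mul_comm,
    ← mul_assoc, Unitary.mul_star_self_of_mem hW, one_mul]

lemma frobC_sq {n l : ℕ} (X : Matrix (Fin n) (Fin l) ℂ) : frobC X ^ 2 = (X * Xᴴ).trace.re :=
  Real.sq_sqrt (Complex.nonneg_iff.mp (posSemidef_self_mul_conjTranspose X).trace_nonneg).1

lemma isLeast_frobC_unitary_mul_sub {n l : ℕ} {A B : Matrix (Fin n) (Fin l) ℂ}
    {W₀ : Matrix (Fin n) (Fin n) ℂ} (hW₀ : W₀ ∈ unitaryGroup (Fin n) ℂ)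
    (hP : (W₀ * (A * Bᴴ)).PosSemidef) :
    IsLeast {x | ∃ W ∈ unitaryGroup (Fin n) ℂ, x = frobC (W * A - B)} (frobC (W₀ * A - B)) := by
  refine ⟨⟨W₀, hW₀, rfl⟩, ?_⟩
  rintro _ ⟨W, hW, rfl⟩
  refine Real.sqrt_le_sqrt ?_
  rw [re_trace_unitary_mul_sub_mul_conjTranspose hW₀, re_trace_unitary_mul_sub_mul_conjTranspose hW]
  linarith [re_trace_mul_le_of_unitary_mul_posSemidef hW hW₀ hP]

theorem stmt11_general (n l : ℕ) (A B : Matrix (Fin n) (Fin l) ℂ) :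
    dU A B ^ 2 = frobC A ^ 2 + frobC B ^ 2 - 2 * nucNorm (A * Bᴴ) ∧
      (∃ W ∈ Matrix.unitaryGroup (Fin n) ℂ, (W * (A * Bᴴ)).PosSemidef) ∧
      ∀ W ∈ Matrix.unitaryGroup (Fin n) ℂ, (W * (A * Bᴴ)).PosSemidef →
        dU A B = frobC (W * A - B) := by
  have hdU : ∀ W ∈ unitaryGroup (Fin n) ℂ, (W * (A * Bᴴ)).PosSemidef →
      dU A B = frobC (W * A - B) := fun W hW hP => (isLeast_frobC_unitary_mul_sub hW hP).csInf_eq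
  obtain ⟨W₀, hW₀, hP₀⟩ := exists_unitary_mul_posSemidef (A * Bᴴ)
  refine ⟨?_, ⟨W₀, hW₀, hP₀⟩, hdU⟩
  rw [hdU W₀ hW₀ hP₀, frobC_sq, frobC_sq, frobC_sq, re_trace_unitary_mul_sub_mul_conjTranspose hW₀,
    nucNorm_eq_re_trace_unitary_mul hW₀ hP₀]

/-- Lemma: `d_{U(n)}(A,B)² = ‖A‖² + ‖B‖² − 2‖AB*‖_★`; there exists `W ∈ U(n)` with
`WAB*` positive semidefinite hermitian, and for any such `W`, `d_{U(n)}(A,B) = ‖WA − B‖`. -/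
theorem stmt11 (n l : ℕ) (hn : 0 < n) (hl : 0 < l) (A B : Matrix (Fin n) (Fin l) ℂ) :
    dU A B ^ 2 = frobC A ^ 2 + frobC B ^ 2 - 2 * nucNorm (A * Bᴴ) ∧
      (∃ W ∈ Matrix.unitaryGroup (Fin n) ℂ, (W * (A * Bᴴ)).PosSemidef) ∧
      ∀ W ∈ Matrix.unitaryGroup (Fin n) ℂ, (W * (A * Bᴴ)).PosSemidef →
        dU A B = frobC (W * A - B) :=
  stmt11_general n l A B
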